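/- Local expansion of the Rényi entropy at α = 1 (the capacity of entanglement as a slope): let p be a strictly positive probability vector on Fin d (p i > 0 for all i). Then the function α ↦ S α p has derivative at α = 1 equal to -(V p)/2, i.e., HasDerivAt (fun α => S α p) (-(V p)/2) 1. -/

import Mathlib

/-- Rényi entropy of a probability vector `p` on `Fin d`
(Shannon entropy at `α = 1`; powers are `Real.rpow`). -/
noncomputable def S {d : ℕ} (α : ℝ) (p : Fin d → ℝ) : ℝ :=
  if α = 1 then -(∑ i, p i * Real.log (p i))
  else (1 - α)⁻¹ * Real.log (∑ i, (p i) ^ α)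

/-- The capacity of entanglement (varentropy) of a strictly positive
probability vector. -/
noncomputable def V {d : ℕ} (p : Fin d → ℝ) : ℝ :=
  (∑ i, p i * (Real.log (p i)) ^ 2) - (∑ i, p i * Real.log (p i)) ^ 2

/-! Put `g α = log ∑ i, p i ^ α`. Then `g 1 = 0`, `g' 1 = ∑ i, p i * log (p i)`, `g'' 1 = V p`,
and `S α p = -(g α - g 1) / (α - 1)` for `α ≠ 1`: the Rényi entropy is minus the difference
quotient of `g` at `1`, extended by `g' 1`. By l'Hôpital, the difference quotient of a function
at `a`, extended by its derivative there, has derivative `g'' a / 2` at `a`. -/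

open Real Filter Topology

-- `slope f a a = 0` is a junk value, hence the `Function.update`.
theorem hasDerivAt_update_slope {f f' : ℝ → ℝ} {f'' a : ℝ}
    (hf : ∀ᶠ x in 𝓝 a, HasDerivAt f (f' x) x) (hf' : HasDerivAt f' f'' a) :
    HasDerivAt (Function.update (slope f a) a (f' a)) (f'' / 2) a := by
  have hnum : ∀ᶠ x in 𝓝 a,
      HasDerivAt (fun x => f x - f a - f' a * (x - a)) (f' x - f' a) x :=
    hf.mono fun x hx => by
      simpa using (hx.sub_const (f a)).fun_sub (((hasDerivAt_id x).sub_const a).const_mul (f' a))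
  have hden (x : ℝ) : HasDerivAt (fun x => (x - a) ^ 2) (2 * (x - a)) x := by
    simpa [mul_comm] using ((hasDerivAt_id x).sub_const a).fun_pow 2
  have hlim : Tendsto (fun x => (f x - f a - f' a * (x - a)) / (x - a) ^ 2) (𝓝[≠] a)
      (𝓝 (f'' / 2)) := by
    refine HasDerivAt.lhopital_zero_nhdsNE (eventually_nhdsWithin_of_eventually_nhds hnum)
      (Eventually.of_forall hden) ?_ ?_ ?_ ?_
    · filter_upwards [self_mem_nhdsWithin] with x (hx : x ≠ a)
      simpa [sub_eq_zero] using hx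
    · simpa using hnum.self_of_nhds.continuousAt.tendsto.mono_left nhdsWithin_le_nhds
    · simpa using (hden a).continuousAt.tendsto.mono_left nhdsWithin_le_nhds
    · refine ((hasDerivAt_iff_tendsto_slope.mp hf').div_const 2).congr' ?_
      filter_upwards [self_mem_nhdsWithin] with x (hx : x ≠ a)
      rw [slope_def_field, div_div, mul_comm]
  rw [hasDerivAt_iff_tendsto_slope]
  refine hlim.congr' ?_
  filter_upwards [self_mem_nhdsWithin] with x (hx : x ≠ a)
  rw [slope_def_field, Function.update_of_ne hx, Function.update_self, slope_def_field]
  field_simp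

section RenyiEntropy

variable {ι : Type*} [Fintype ι] {p : ι → ℝ}

theorem hasDerivAt_sum_rpow_mul (hp : ∀ i, 0 < p i) (w : ι → ℝ) (α : ℝ) :
    HasDerivAt (fun β => ∑ i, p i ^ β * w i) (∑ i, p i ^ α * log (p i) * w i) α :=
  HasDerivAt.fun_sum fun i _ => (hasStrictDerivAt_const_rpow (hp i) α).hasDerivAt.mul_const (w i)

theorem hasDerivAt_sum_rpow (hp : ∀ i, 0 < p i) (α : ℝ) :
    HasDerivAt (fun β => ∑ i, p i ^ β) (∑ i, p i ^ α * log (p i)) α := by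
  simpa using hasDerivAt_sum_rpow_mul hp (fun _ => 1) α

theorem sum_rpow_pos [Nonempty ι] (hp : ∀ i, 0 < p i) (α : ℝ) : 0 < ∑ i, p i ^ α :=
  Finset.sum_pos (fun i _ => rpow_pos_of_pos (hp i) α) Finset.univ_nonempty

theorem hasDerivAt_log_sum_rpow [Nonempty ι] (hp : ∀ i, 0 < p i) (α : ℝ) :
    HasDerivAt (fun β => log (∑ i, p i ^ β))
      ((∑ i, p i ^ α * log (p i)) / ∑ i, p i ^ α) α :=
  (hasDerivAt_sum_rpow hp α).log (sum_rpow_pos hp α).ne'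

theorem hasDerivAt_div_sum_rpow_at_one [Nonempty ι] (hp : ∀ i, 0 < p i) (hp1 : ∑ i, p i = 1) :
    HasDerivAt (fun β : ℝ => (∑ i, p i ^ β * log (p i)) / ∑ i, p i ^ β)
      ((∑ i, p i * log (p i) ^ 2) - (∑ i, p i * log (p i)) ^ 2) 1 := by
  refine ((hasDerivAt_sum_rpow_mul hp (fun i => log (p i)) 1).fun_div (hasDerivAt_sum_rpow hp 1)
    (sum_rpow_pos hp 1).ne').congr_deriv ?_
  simp only [rpow_one, hp1, mul_assoc, ← sq]
  ring

end RenyiEntropy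

/-- Local expansion of the Rényi entropy at `α = 1`. -/
theorem hasDerivAt_renyi_at_one {d : ℕ} (p : Fin d → ℝ)
    (hp : ∀ i, 0 < p i) (hp1 : ∑ i, p i = 1) :
    HasDerivAt (fun α => S α p) (-(V p) / 2) 1 := by
  have hne : Nonempty (Fin d) := by
    by_contra h
    simp [not_nonempty_iff.mp h] at hp1
  set g := fun β : ℝ => log (∑ i, p i ^ β)
  set g' := fun β : ℝ => (∑ i, p i ^ β * log (p i)) / ∑ i, p i ^ β
  have hS : (fun α => S α p) = fun α => -Function.update (slope g 1) 1 (g' 1) α := by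
    funext α
    rcases eq_or_ne α 1 with rfl | hα
    · simp [S, g', hp1]
    · have hα' : 1 - α ≠ 0 := sub_ne_zero.mpr hα.symm
      simp [S, hα, slope_def_field, g, hp1]
      field_simp
      ring
  rw [hS, neg_div]
  exact (hasDerivAt_update_slope (Eventually.of_forall (hasDerivAt_log_sum_rpow hp))
    (hasDerivAt_div_sum_rpow_at_one hp hp1)).neg
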